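/- If two distinct leaves j and j' both lie in ⋂_{m=1}^M f^m(x), then x satisfies the full path conditions of both leaves, contradicting path mutual exclusivity; hence the intersection of all parties' candidate sets has cardinality at most 1. -/

import Mathlib

/-!
Party `m`'s local condition for a leaf is the conjunction of the branch conditions at the
`m`-owned nodes of its path, so the conjunction over all parties is the full path condition:
a leaf lies in every candidate set exactly when `x` reaches it. The paths of two distinct
leaves split at some node, where `x` cannot take both branches, so `x` reaches at most one leaf.
-/

/-- A decision tree whose internal nodes carry an owner (party) of type `M`
and a Boolean split predicate on the input space `X`; leaves carry weights. -/
inductive OTree (X M : Type) where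
  | leaf : ℝ → OTree X M
  | node : M → (X → Bool) → OTree X M → OTree X M → OTree X M

namespace OTree

variable {X M : Type}

/-- Full path condition of each leaf (listed left-to-right): the conjunction of
the branch conditions along the root-to-leaf path. -/
def fullConds : OTree X M → List (X → Bool)
  | .leaf _ => [fun _ => true]
  | .node _ p l r =>
      (fullConds l).map (fun c x => (!(p x)) && c x) ++
      (fullConds r).map (fun c x => (p x) && c x)

/-- Party `m`'s local path condition of each leaf: the conjunction of branch
conditions restricted to nodes owned by `m`. -/
def condsFor [DecidableEq M] (m : M) : OTree X M → List (X → Bool)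
  | .leaf _ => [fun _ => true]
  | .node o p l r =>
      ((condsFor m l).map (fun c x => (if o = m then !(p x) else true) && c x)) ++
      ((condsFor m r).map (fun c x => (if o = m then p x else true) && c x))

/-- Leaf weights, listed left-to-right. -/
def weights : OTree X M → List ℝ
  | .leaf w => [w]
  | .node _ _ l r => weights l ++ weights r

/-- Standard recursive evaluation of a decision tree. -/
def eval : OTree X M → X → ℝ
  | .leaf w, _ => w
  | .node _ p l r, x => if p x then r.eval x else l.eval x

/-- Party `m`'s candidate set of leaves (by index) for input `x`. -/
def cand [DecidableEq M] (t : OTree X M) (m : M) (x : X) : Set ℕ :=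
  {i | i < (condsFor m t).length ∧ ((condsFor m t).getD i (fun _ => false)) x = true}

/-- The set of leaves (by index) whose full path condition is satisfied by `x`
(the leaf actually reached by `x`). -/
def reach (t : OTree X M) (x : X) : Set ℕ :=
  {i | i < (fullConds t).length ∧ ((fullConds t).getD i (fun _ => false)) x = true}

end OTree


namespace List

variable {X : Type}

def trueIndices (L : List (X → Bool)) (x : X) : Set ℕ :=
  {i | i < L.length ∧ (L.getD i fun _ => false) x = true}

lemma mem_trueIndices {L : List (X → Bool)} {x : X} {i : ℕ} :
    i ∈ L.trueIndices x ↔ ∃ c ∈ L[i]?, c x = true := by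
  rw [trueIndices, Set.mem_ofPred_eq]
  constructor
  · rintro ⟨hi, hc⟩
    exact ⟨L[i], by simp [hi], by rwa [getD_eq_getElem _ _ hi] at hc⟩
  · rintro ⟨c, hc, hcx⟩
    obtain ⟨hi, rfl⟩ := getElem?_eq_some_iff.mp hc
    exact ⟨hi, by rwa [getD_eq_getElem _ _ hi]⟩

lemma trueIndices_subset_Iio (L : List (X → Bool)) (x : X) :
    L.trueIndices x ⊆ Set.Iio L.length :=
  fun _ hi => hi.1

lemma trueIndices_singleton_true (x : X) : [fun _ : X => true].trueIndices x = {0} := by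
  ext i
  cases i <;> simp [mem_trueIndices]

lemma trueIndices_append (L₁ L₂ : List (X → Bool)) (x : X) :
    (L₁ ++ L₂).trueIndices x = L₁.trueIndices x ∪ (L₁.length + ·) '' L₂.trueIndices x := by
  ext i
  rcases lt_or_ge i L₁.length with hi | hi
  · have hnot : i ∉ (L₁.length + ·) '' L₂.trueIndices x := by
      rintro ⟨j, -, hj⟩
      simp only at hj
      omega
    simp [mem_trueIndices, getElem?_append_left hi, hnot]
  · obtain ⟨j, rfl⟩ := Nat.exists_eq_add_of_le hi
    have hnot : L₁.length + j ∉ L₁.trueIndices x := fun h => by have := h.1; omega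
    simp [mem_trueIndices, getElem?_append_right, hnot]

lemma trueIndices_map_and (L : List (X → Bool)) (b : X → Bool) (x : X) :
    (L.map fun c y => b y && c y).trueIndices x = {i ∈ L.trueIndices x | b x = true} := by
  ext i
  rw [Set.mem_sep_iff, mem_trueIndices, mem_trueIndices, getElem?_map]
  cases hb : b x <;> simp [hb]

end List

namespace Set

lemma iInter_union_image_add {ι : Type*} {n : ℕ} (A B : ι → Set ℕ) (hA : ∀ i, A i ⊆ Iio n) :
    ⋂ i, (A i ∪ (n + ·) '' B i) = (⋂ i, A i) ∪ (n + ·) '' ⋂ i, B i := by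
  ext k
  rcases lt_or_ge k n with hk | hk
  · have hnot : ∀ C : Set ℕ, k ∉ (n + ·) '' C := by
      rintro C ⟨j, -, hj⟩
      simp only at hj
      omega
    simp [hnot]
  · obtain ⟨j, rfl⟩ := Nat.exists_eq_add_of_le hk
    have hnot : ∀ i, n + j ∉ A i := fun i h => by have := hA i h; simp at this
    simpa [hnot] using fun h i => (h i).elim

lemma iInter_sep_imp {ι α : Type*} (C : ι → Set α) (i₀ : ι) (P : Prop) :
    ⋂ i, {a ∈ C i | i₀ = i → P} = {a ∈ ⋂ i, C i | P} := by
  ext a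
  simp only [mem_iInter, mem_sep_iff]
  exact ⟨fun h => ⟨fun i => (h i).1, (h i₀).2 rfl⟩, fun h i => ⟨h.1 i, fun _ => h.2⟩⟩

end Set

namespace OTree

variable {X M : Type}

lemma length_condsFor [DecidableEq M] (m : M) (t : OTree X M) :
    (condsFor m t).length = (fullConds t).length := by
  induction t with
  | leaf => rfl
  | node o p l r ihl ihr => simp [condsFor, fullConds, ihl, ihr]

lemma reach_eq_trueIndices (t : OTree X M) (x : X) : reach t x = (fullConds t).trueIndices x :=
  rfl

lemma cand_eq_trueIndices [DecidableEq M] (t : OTree X M) (m : M) (x : X) :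
    cand t m x = (condsFor m t).trueIndices x :=
  rfl

lemma reach_leaf (w : ℝ) (x : X) : reach (.leaf w : OTree X M) x = {0} :=
  List.trueIndices_singleton_true x

lemma cand_leaf [DecidableEq M] (w : ℝ) (m : M) (x : X) : cand (.leaf w) m x = {0} :=
  List.trueIndices_singleton_true x

lemma reach_node (o : M) (p : X → Bool) (l r : OTree X M) (x : X) :
    reach (node o p l r) x =
      {i ∈ reach l x | p x = false} ∪ ((fullConds l).length + ·) '' {i ∈ reach r x | p x = true} := by
  simp only [reach_eq_trueIndices, fullConds, List.trueIndices_append, List.trueIndices_map_and,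
    List.length_map, Bool.not_eq_true']

lemma cand_node [DecidableEq M] (o : M) (p : X → Bool) (l r : OTree X M) (m : M) (x : X) :
    cand (node o p l r) m x =
      {i ∈ cand l m x | o = m → p x = false} ∪
        ((fullConds l).length + ·) '' {i ∈ cand r m x | o = m → p x = true} := by
  simp only [cand_eq_trueIndices, condsFor, List.trueIndices_append, List.trueIndices_map_and,
    List.length_map, length_condsFor]
  by_cases ho : o = m <;> simp [ho]

theorem reach_subsingleton (t : OTree X M) (x : X) : (reach t x).Subsingleton := by
  induction t with
  | leaf => simp [reach_leaf]
  | node o p l r ihl ihr =>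
    rw [reach_node]
    cases p x
    · simpa using ihl
    · simpa using ihr.image _

theorem iInter_cand_eq_reach [DecidableEq M] [Nonempty M] (t : OTree X M) (x : X) :
    ⋂ m, cand t m x = reach t x := by
  induction t with
  | leaf => simp only [cand_leaf, reach_leaf, Set.iInter_const]
  | node o p l r ihl ihr =>
    have hsub : ∀ m, {i ∈ cand l m x | o = m → p x = false} ⊆ Set.Iio (fullConds l).length :=
      fun m => (Set.sep_subset _ _).trans
        (length_condsFor m l ▸ List.trueIndices_subset_Iio (condsFor m l) x)
    simp only [cand_node]
    rw [Set.iInter_union_image_add _ _ hsub, Set.iInter_sep_imp _ o, Set.iInter_sep_imp _ o,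
      ihl, ihr, reach_node]

end OTree

/-- No two distinct leaves can both lie in the intersection of all parties'
candidate sets: the intersection has cardinality at most 1. -/
theorem inter_cand_subsingleton {X M : Type} [DecidableEq M] [Nonempty M]
    (t : OTree X M) (x : X) :
    (⋂ m : M, t.cand m x).Subsingleton := by
  rw [OTree.iInter_cand_eq_reach]
  exact OTree.reach_subsingleton t x
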